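/- arXiv:2107.00464 — 2 statements merged into one kernel-verified Lean document; each statement's English description precedes it below -/
import Mathlib

section
/- Consider one step of the same-sample extragradient update for the bilinear game with nonrandom matrix B (so B_ξ = B) and zero noise: x' = x - η² BBᵀ x - η B y, y' = y - η² BᵀB y + η Bᵀ x. Then ‖x'‖² + ‖y'‖² = xᵀ(I - η²(BBᵀ - η²(BBᵀ)²))x + yᵀ(I - η²(BᵀB - η²(BᵀB)²))y; in particular if 0 < η ≤ 1/√(λ_max(BᵀB)), then ‖x'‖² + ‖y'‖² ≤ (1 - η²(1 - η²λ_max(BᵀB))·λ_min(BBᵀ, BᵀB))·(‖x‖² + ‖y‖²), where λ_min(BBᵀ, BᵀB) denotes min(λ_min(BBᵀ), λ_min(BᵀB)). -/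
open Matrix

noncomputable def lamMax {k : ℕ} {A : Matrix (Fin k) (Fin k) ℝ} (hA : A.IsHermitian) : ℝ :=
  ⨆ i, hA.eigenvalues i

noncomputable def lamMin {k : ℕ} {A : Matrix (Fin k) (Fin k) ℝ} (hA : A.IsHermitian) : ℝ :=
  ⨅ i, hA.eigenvalues i

lemma dotmv {k l : ℕ} (P : Matrix (Fin k) (Fin l) ℝ) (u : Fin l → ℝ) (v : Fin k → ℝ) :
    (P *ᵥ u) ⬝ᵥ v = u ⬝ᵥ (Pᵀ *ᵥ v) := by
  rw [dotProduct_comm, dotProduct_mulVec, ← mulVec_transpose, dotProduct_comm]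

lemma mvdotmv {k l k' : ℕ} (P : Matrix (Fin k) (Fin l) ℝ) (Q : Matrix (Fin k) (Fin k') ℝ)
    (u : Fin l → ℝ) (v : Fin k' → ℝ) :
    (P *ᵥ u) ⬝ᵥ (Q *ᵥ v) = u ⬝ᵥ ((Pᵀ * Q) *ᵥ v) := by
  rw [dotmv, mulVec_mulVec]

lemma dot_flip {k l : ℕ} (C : Matrix (Fin k) (Fin l) ℝ) (u : Fin k → ℝ) (v : Fin l → ℝ) :
    u ⬝ᵥ (C *ᵥ v) = v ⬝ᵥ (Cᵀ *ᵥ u) := by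
  rw [dotProduct_comm, dotmv]

lemma quad_repr {k : ℕ} {A : Matrix (Fin k) (Fin k) ℝ} (hA : A.IsHermitian) (x : Fin k → ℝ) :
    ∃ c : Fin k → ℝ,
      x ⬝ᵥ x = ∑ i, c i ^ 2 ∧
      x ⬝ᵥ A *ᵥ x = ∑ i, hA.eigenvalues i * c i ^ 2 ∧
      x ⬝ᵥ (A * A) *ᵥ x = ∑ i, hA.eigenvalues i ^ 2 * c i ^ 2 := by
  set U : Matrix (Fin k) (Fin k) ℝ := (hA.eigenvectorUnitary : Matrix (Fin k) (Fin k) ℝ) with hU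
  have hU1 : U * star U = 1 := Matrix.mem_unitaryGroup_iff.mp hA.eigenvectorUnitary.2
  have hU2 : star U * U = 1 := Matrix.mem_unitaryGroup_iff'.mp hA.eigenvectorUnitary.2
  have hspec : A = U * Matrix.diagonal hA.eigenvalues * star U := by
    have := hA.spectral_theorem
    simpa [RCLike.ofReal_real_eq_id] using this
  set c : Fin k → ℝ := (star U) *ᵥ x with hc
  have hUT : Uᵀ = star U := by
    rw [Matrix.star_eq_conjTranspose, conjTranspose_eq_transpose_of_trivial]
  have key : ∀ d : Fin k → ℝ, x ⬝ᵥ (U * Matrix.diagonal d * star U) *ᵥ x = ∑ i, d i * c i ^ 2 := by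
    intro d
    rw [← mulVec_mulVec, ← mulVec_mulVec, dotProduct_mulVec, ← mulVec_transpose, hUT, ← hc,
      dotProduct]
    refine Finset.sum_congr rfl fun i _ => ?_
    rw [mulVec_diagonal]; ring
  refine ⟨c, ?_, ?_, ?_⟩
  · have h1 : (1 : Matrix (Fin k) (Fin k) ℝ) = U * Matrix.diagonal (fun _ => (1:ℝ)) * star U := by
      rw [Matrix.diagonal_one, mul_one, hU1]
    calc x ⬝ᵥ x = x ⬝ᵥ (1 : Matrix (Fin k) (Fin k) ℝ) *ᵥ x := by rw [one_mulVec]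
      _ = ∑ i, c i ^ 2 := by rw [h1, key]; simp
  · conv_lhs => rw [hspec]
    rw [key]
  · have hAA : A * A = U * Matrix.diagonal (fun i => hA.eigenvalues i ^ 2) * star U := by
      conv_lhs => rw [hspec]
      simp only [Matrix.mul_assoc]
      rw [show star U * (U * (Matrix.diagonal hA.eigenvalues * star U))
            = Matrix.diagonal hA.eigenvalues * star U by rw [← Matrix.mul_assoc, hU2, one_mul],
        ← Matrix.mul_assoc (Matrix.diagonal hA.eigenvalues), diagonal_mul_diagonal]
      simp only [Matrix.mul_assoc, ← pow_two]
    conv_lhs => rw [hAA]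
    rw [key]

lemma ev_le_lamMax {k : ℕ} {A : Matrix (Fin k) (Fin k) ℝ} (hA : A.IsHermitian) (i : Fin k) :
    hA.eigenvalues i ≤ lamMax hA :=
  le_ciSup (Set.Finite.bddAbove (Set.finite_range _)) i

lemma lamMin_le_ev {k : ℕ} {A : Matrix (Fin k) (Fin k) ℝ} (hA : A.IsHermitian) (i : Fin k) :
    lamMin hA ≤ hA.eigenvalues i :=
  ciInf_le (Set.Finite.bddBelow (Set.finite_range _)) i

lemma quad_le_lamMax {k : ℕ} {A : Matrix (Fin k) (Fin k) ℝ} (hA : A.IsHermitian) (x : Fin k → ℝ) :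
    x ⬝ᵥ A *ᵥ x ≤ lamMax hA * (x ⬝ᵥ x) := by
  obtain ⟨c, h0, h1, -⟩ := quad_repr hA x
  rw [h0, h1, Finset.mul_sum]
  exact Finset.sum_le_sum fun i _ =>
    mul_le_mul_of_nonneg_right (ev_le_lamMax hA i) (sq_nonneg _)

lemma lamMin_quad_le {k : ℕ} {A : Matrix (Fin k) (Fin k) ℝ} (hA : A.IsHermitian) (x : Fin k → ℝ) :
    lamMin hA * (x ⬝ᵥ x) ≤ x ⬝ᵥ A *ᵥ x := by
  obtain ⟨c, h0, h1, -⟩ := quad_repr hA x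
  rw [h0, h1, Finset.mul_sum]
  exact Finset.sum_le_sum fun i _ =>
    mul_le_mul_of_nonneg_right (lamMin_le_ev hA i) (sq_nonneg _)

lemma quadsq_le {k : ℕ} {A : Matrix (Fin k) (Fin k) ℝ} (hA : A.IsHermitian)
    (hev : ∀ i, 0 ≤ hA.eigenvalues i) (x : Fin k → ℝ) :
    x ⬝ᵥ (A * A) *ᵥ x ≤ lamMax hA * (x ⬝ᵥ A *ᵥ x) := by
  obtain ⟨c, -, h1, h2⟩ := quad_repr hA x
  rw [h1, h2, Finset.mul_sum]
  refine Finset.sum_le_sum fun i _ => ?_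
  have h := mul_nonneg (sub_nonneg.mpr (ev_le_lamMax hA i))
    (mul_nonneg (hev i) (sq_nonneg (c i)))
  nlinarith [h]

lemma dot_self_nonneg {k : ℕ} (x : Fin k → ℝ) : 0 ≤ x ⬝ᵥ x :=
  Finset.sum_nonneg fun i _ => mul_self_nonneg (x i)

lemma expand_quad {k : ℕ} (A : Matrix (Fin k) (Fin k) ℝ) (η : ℝ) (x : Fin k → ℝ) :
    x ⬝ᵥ ((1 - η ^ 2 • (A - η ^ 2 • (A * A))).mulVec x)
      = x ⬝ᵥ x - η ^ 2 * (x ⬝ᵥ A *ᵥ x) + η ^ 2 * η ^ 2 * (x ⬝ᵥ (A * A) *ᵥ x) := by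
  simp only [Matrix.sub_mulVec, Matrix.smul_mulVec, Matrix.one_mulVec,
    dotProduct_sub, dotProduct_smul, smul_eq_mul]
  ring

/-- One step of the deterministic same-sample extragradient update for the bilinear game:
`x' = x - η²BBᵀx - ηBy`, `y' = y - η²BᵀBy + ηBᵀx`. Then
`‖x'‖² + ‖y'‖² = xᵀ(I - η²(BBᵀ - η²(BBᵀ)²))x + yᵀ(I - η²(BᵀB - η²(BᵀB)²))y`, and if
`0 < η ≤ 1/√(λ_max(BᵀB))` then
`‖x'‖² + ‖y'‖² ≤ (1 - η²(1 - η²λ_max(BᵀB))·min(λ_min(BBᵀ), λ_min(BᵀB)))(‖x‖² + ‖y‖²)`. -/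
theorem stmt15 (n m : ℕ) (B : Matrix (Fin n) (Fin m) ℝ)
    (x x' : Fin n → ℝ) (y y' : Fin m → ℝ) (η : ℝ) (hη : 0 < η)
    (hx' : x' = x - η ^ 2 • (B * Bᵀ).mulVec x - η • B.mulVec y)
    (hy' : y' = y - η ^ 2 • (Bᵀ * B).mulVec y + η • Bᵀ.mulVec x)
    (hBBT : (B * Bᵀ).IsHermitian) (hBTB : (Bᵀ * B).IsHermitian) :
    (x' ⬝ᵥ x' + y' ⬝ᵥ y'
      = x ⬝ᵥ ((1 - η ^ 2 • ((B * Bᵀ) - η ^ 2 • ((B * Bᵀ) * (B * Bᵀ)))).mulVec x)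
        + y ⬝ᵥ ((1 - η ^ 2 • ((Bᵀ * B) - η ^ 2 • ((Bᵀ * B) * (Bᵀ * B)))).mulVec y)) ∧
    (η ≤ 1 / Real.sqrt (lamMax hBTB) →
      x' ⬝ᵥ x' + y' ⬝ᵥ y'
        ≤ (1 - η ^ 2 * (1 - η ^ 2 * lamMax hBTB) * min (lamMin hBBT) (lamMin hBTB)) *
          (x ⬝ᵥ x + y ⬝ᵥ y)) := by
  subst hx' hy'
  have part1 :
      (x - η ^ 2 • (B * Bᵀ).mulVec x - η • B.mulVec y) ⬝ᵥ (x - η ^ 2 • (B * Bᵀ).mulVec x - η • B.mulVec y)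
      + (y - η ^ 2 • (Bᵀ * B).mulVec y + η • Bᵀ.mulVec x) ⬝ᵥ (y - η ^ 2 • (Bᵀ * B).mulVec y + η • Bᵀ.mulVec x)
      = x ⬝ᵥ ((1 - η ^ 2 • ((B * Bᵀ) - η ^ 2 • ((B * Bᵀ) * (B * Bᵀ)))).mulVec x)
        + y ⬝ᵥ ((1 - η ^ 2 • ((Bᵀ * B) - η ^ 2 • ((Bᵀ * B) * (Bᵀ * B)))).mulVec y) := by
    have E1 : ((B*Bᵀ) *ᵥ x) ⬝ᵥ x = x ⬝ᵥ ((B*Bᵀ) *ᵥ x) := dotProduct_comm _ _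
    have E2 : ((B*Bᵀ) *ᵥ x) ⬝ᵥ ((B*Bᵀ) *ᵥ x) = x ⬝ᵥ ((B*(Bᵀ*(B*Bᵀ))) *ᵥ x) := by
      rw [mvdotmv]; simp [transpose_mul, transpose_transpose, Matrix.mul_assoc]
    have E3 : ((B*Bᵀ) *ᵥ x) ⬝ᵥ (B *ᵥ y) = x ⬝ᵥ ((B*(Bᵀ*B)) *ᵥ y) := by
      rw [mvdotmv]; simp [transpose_mul, transpose_transpose, Matrix.mul_assoc]
    have E5 : (B *ᵥ y) ⬝ᵥ x = x ⬝ᵥ (B *ᵥ y) := dotProduct_comm _ _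
    have E6 : (B *ᵥ y) ⬝ᵥ ((B*Bᵀ) *ᵥ x) = x ⬝ᵥ ((B*(Bᵀ*B)) *ᵥ y) := by
      rw [mvdotmv, dot_flip]; simp [transpose_mul, transpose_transpose, Matrix.mul_assoc]
    have E7 : (B *ᵥ y) ⬝ᵥ (B *ᵥ y) = y ⬝ᵥ ((Bᵀ*B) *ᵥ y) := by rw [mvdotmv]
    have F1 : ((Bᵀ*B) *ᵥ y) ⬝ᵥ y = y ⬝ᵥ ((Bᵀ*B) *ᵥ y) := dotProduct_comm _ _
    have F2 : ((Bᵀ*B) *ᵥ y) ⬝ᵥ ((Bᵀ*B) *ᵥ y) = y ⬝ᵥ ((Bᵀ*(B*(Bᵀ*B))) *ᵥ y) := by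
      rw [mvdotmv]; simp [transpose_mul, transpose_transpose, Matrix.mul_assoc]
    have F3 : ((Bᵀ*B) *ᵥ y) ⬝ᵥ (Bᵀ *ᵥ x) = x ⬝ᵥ ((B*(Bᵀ*B)) *ᵥ y) := by
      rw [mvdotmv, dot_flip]; simp [transpose_mul, transpose_transpose, Matrix.mul_assoc]
    have F4 : y ⬝ᵥ (Bᵀ *ᵥ x) = x ⬝ᵥ (B *ᵥ y) := by rw [dot_flip, transpose_transpose]
    have F5 : (Bᵀ *ᵥ x) ⬝ᵥ y = x ⬝ᵥ (B *ᵥ y) := by rw [dotmv, transpose_transpose]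
    have F6 : (Bᵀ *ᵥ x) ⬝ᵥ ((Bᵀ*B) *ᵥ y) = x ⬝ᵥ ((B*(Bᵀ*B)) *ᵥ y) := by
      rw [mvdotmv, transpose_transpose]
    have F7 : (Bᵀ *ᵥ x) ⬝ᵥ (Bᵀ *ᵥ x) = x ⬝ᵥ ((B*Bᵀ) *ᵥ x) := by
      rw [mvdotmv, transpose_transpose]
    simp only [Matrix.sub_mulVec, Matrix.smul_mulVec, Matrix.one_mulVec,
      sub_dotProduct, dotProduct_sub, add_dotProduct, dotProduct_add,
      smul_dotProduct, dotProduct_smul, smul_eq_mul, Matrix.mul_assoc]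
    rw [E1, E2, E3, E5, E6, E7, F1, F2, F3, F4, F5, F6, F7]
    ring
  refine ⟨part1, fun hle => ?_⟩
  have hLpos : 0 < lamMax hBTB :=
    Real.sqrt_pos.mp (one_div_pos.mp (lt_of_lt_of_le hη hle))
  have hηL : η ^ 2 * lamMax hBTB ≤ 1 := by
    have hs : 0 < Real.sqrt (lamMax hBTB) := Real.sqrt_pos.mpr hLpos
    have h1 : η * Real.sqrt (lamMax hBTB) ≤ 1 := by
      calc η * Real.sqrt (lamMax hBTB)
          ≤ (1 / Real.sqrt (lamMax hBTB)) * Real.sqrt (lamMax hBTB) :=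
            mul_le_mul_of_nonneg_right hle hs.le
        _ = 1 := by field_simp
    have h2 : η ^ 2 * lamMax hBTB = (η * Real.sqrt (lamMax hBTB)) ^ 2 := by
      rw [mul_pow, Real.sq_sqrt hLpos.le]
    rw [h2]
    nlinarith [mul_nonneg hη.le hs.le, h1]
  have hR : x ⬝ᵥ ((B*Bᵀ)*(B*Bᵀ)) *ᵥ x ≤ lamMax hBTB * (x ⬝ᵥ (B*Bᵀ) *ᵥ x) := by
    have e1 : x ⬝ᵥ ((B*Bᵀ)*(B*Bᵀ)) *ᵥ x = (Bᵀ *ᵥ x) ⬝ᵥ (Bᵀ*B) *ᵥ (Bᵀ *ᵥ x) := by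
      rw [mulVec_mulVec, mvdotmv, transpose_transpose]
      simp [Matrix.mul_assoc]
    have e2 : x ⬝ᵥ (B*Bᵀ) *ᵥ x = (Bᵀ *ᵥ x) ⬝ᵥ (Bᵀ *ᵥ x) := by
      rw [mvdotmv, transpose_transpose]
    rw [e1, e2]
    exact quad_le_lamMax hBTB _
  have hevN : ∀ i, 0 ≤ hBTB.eigenvalues i := by
    intro i
    have hp : (Bᵀ * B).PosSemidef := by
      have := Matrix.posSemidef_conjTranspose_mul_self B
      rwa [conjTranspose_eq_transpose_of_trivial] at this
    exact hp.eigenvalues_nonneg i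
  have hS : y ⬝ᵥ ((Bᵀ*B)*(Bᵀ*B)) *ᵥ y ≤ lamMax hBTB * (y ⬝ᵥ (Bᵀ*B) *ᵥ y) :=
    quadsq_le hBTB hevN y
  have hPm := lamMin_quad_le hBBT x
  have hQm := lamMin_quad_le hBTB y
  have hx2 := dot_self_nonneg x
  have hy2 := dot_self_nonneg y
  rw [part1, expand_quad, expand_quad]
  have hcoef : 0 ≤ η^2 * (1 - η^2 * lamMax hBTB) := mul_nonneg (sq_nonneg η) (by linarith)
  have hP' : min (lamMin hBBT) (lamMin hBTB) * (x ⬝ᵥ x) ≤ x ⬝ᵥ (B*Bᵀ) *ᵥ x :=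
    le_trans (mul_le_mul_of_nonneg_right (min_le_left _ _) hx2) hPm
  have hQ' : min (lamMin hBBT) (lamMin hBTB) * (y ⬝ᵥ y) ≤ y ⬝ᵥ (Bᵀ*B) *ᵥ y :=
    le_trans (mul_le_mul_of_nonneg_right (min_le_right _ _) hy2) hQm
  have k1 := mul_le_mul_of_nonneg_left hR (by positivity : (0:ℝ) ≤ η^2*η^2)
  have k2 := mul_le_mul_of_nonneg_left hS (by positivity : (0:ℝ) ≤ η^2*η^2)
  have k3 := mul_le_mul_of_nonneg_left hP' hcoef
  have k4 := mul_le_mul_of_nonneg_left hQ' hcoef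
  nlinarith [k1, k2, k3, k4]
end

section
/- In the deterministic bilinear game with square invertible B and step size η ∈ (0, 1/√(λ_max(BᵀB))], the averaged extragradient iterates satisfy ‖x̄_{K-1}‖² + ‖ȳ_{K-1}‖² ≤ 4/(η²K²·λ_min(BBᵀ)(1 + η²λ_min(BBᵀ)))·(‖x_0‖² + ‖y_0‖²), for all K ≥ 1, where x̄, ȳ are the iterate averages. -/
/-!
Write `M = BBᵀ`, `N = BᵀB`. Expanding the squared norm of one extragradient step, the bilinear
cross terms cancel and the energy `‖x‖² + ‖y‖²` changes by
`-η²(‖Bᵀx‖² + ‖By‖²) + η⁴(‖Mx‖² + ‖Ny‖²) ≤ 0` as soon as `η² λ_max ≤ 1`, so it never increases.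
Summing the updates telescopes: `x₀ - x_K = η(BT + ηMS)` and `y₀ - y_K = -η(BᵀS - ηNT)`, where
`S`, `T` are the sums of the iterates, and these differences have total squared norm at most
`4(‖x₀‖² + ‖y₀‖²)`. Expanding once more, the cross terms cancel again, leaving
`‖BᵀS‖² + η²‖MS‖² + ‖BT‖² + η²‖NT‖²`. Since `M` and `N` have the same characteristic polynomial,
hence the same eigenvalues, every `‖Bv‖²` and `‖Bᵀv‖²` is at least `λ_min(M)‖v‖²`, which bounds
this from below by `λ_min(M)(1 + η²λ_min(M))(‖S‖² + ‖T‖²)`.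
-/

open Matrix

section DotProduct

variable {ι R : Type*} [Fintype ι] [CommRing R] [LinearOrder R] [IsStrictOrderedRing R]

lemma dotProduct_self_nonneg (v : ι → R) : 0 ≤ v ⬝ᵥ v :=
  Finset.sum_nonneg fun i _ ↦ mul_self_nonneg (v i)

lemma sub_dotProduct_sub_le (u w : ι → R) :
    (u - w) ⬝ᵥ (u - w) ≤ 2 * (u ⬝ᵥ u) + 2 * (w ⬝ᵥ w) := by
  have := dotProduct_self_nonneg (u + w)
  simp only [dotProduct_add, add_dotProduct, dotProduct_sub, sub_dotProduct] at *
  linarith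

end DotProduct

section Rayleigh

variable {ι : Type*} [Fintype ι] [DecidableEq ι] {A : Matrix ι ι ℝ}

lemma Matrix.IsHermitian.posSemidef_sub_smul_one (hA : A.IsHermitian) {c : ℝ}
    (hc : ∀ i, c ≤ hA.eigenvalues i) : (A - c • 1).PosSemidef := by
  rw [posSemidef_iff_isHermitian_and_spectrum_nonneg]
  refine ⟨hA.sub (isHermitian_one.smul (.all c)), ?_⟩
  rw [← Algebra.algebraMap_eq_smul_one, ← spectrum.sub_singleton_eq,
    hA.spectrum_real_eq_range_eigenvalues]
  rintro _ ⟨_, ⟨i, rfl⟩, _, rfl, rfl⟩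
  exact sub_nonneg.2 (hc i)

lemma Matrix.IsHermitian.posSemidef_smul_one_sub (hA : A.IsHermitian) {c : ℝ}
    (hc : ∀ i, hA.eigenvalues i ≤ c) : (c • 1 - A).PosSemidef := by
  rw [posSemidef_iff_isHermitian_and_spectrum_nonneg]
  refine ⟨(isHermitian_one.smul (.all c)).sub hA, ?_⟩
  rw [← Algebra.algebraMap_eq_smul_one, ← spectrum.singleton_sub_eq,
    hA.spectrum_real_eq_range_eigenvalues]
  rintro _ ⟨_, rfl, _, ⟨i, rfl⟩, rfl⟩
  exact sub_nonneg.2 (hc i)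

lemma Matrix.IsHermitian.mul_dotProduct_self_le (hA : A.IsHermitian) {c : ℝ}
    (hc : ∀ i, c ≤ hA.eigenvalues i) (v : ι → ℝ) : c * (v ⬝ᵥ v) ≤ v ⬝ᵥ A *ᵥ v := by
  have := (hA.posSemidef_sub_smul_one hc).dotProduct_mulVec_nonneg v
  simpa [sub_mulVec, smul_mulVec, dotProduct_smul] using this

lemma Matrix.IsHermitian.dotProduct_mulVec_le_mul (hA : A.IsHermitian) {c : ℝ}
    (hc : ∀ i, hA.eigenvalues i ≤ c) (v : ι → ℝ) : v ⬝ᵥ A *ᵥ v ≤ c * (v ⬝ᵥ v) := by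
  have := (hA.posSemidef_smul_one_sub hc).dotProduct_mulVec_nonneg v
  simpa [sub_mulVec, smul_mulVec, dotProduct_smul] using this

end Rayleigh

section Eigenvalues

variable {k : ℕ} {A : Matrix (Fin k) (Fin k) ℝ}

lemma lamMin_mul_dotProduct_self_le (hA : A.IsHermitian) (v : Fin k → ℝ) :
    lamMin hA * (v ⬝ᵥ v) ≤ v ⬝ᵥ A *ᵥ v :=
  hA.mul_dotProduct_self_le (fun i ↦ ciInf_le (Set.finite_range _).bddBelow i) v

lemma dotProduct_mulVec_le_lamMax_mul (hA : A.IsHermitian) (v : Fin k → ℝ) :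
    v ⬝ᵥ A *ᵥ v ≤ lamMax hA * (v ⬝ᵥ v) :=
  hA.dotProduct_mulVec_le_mul (fun i ↦ le_ciSup (Set.finite_range _).bddAbove i) v

lemma lamMin_pos [NeZero k] (hA : A.PosDef) : 0 < lamMin hA.isHermitian := by
  obtain ⟨i, hi⟩ := exists_eq_ciInf_of_finite (f := hA.isHermitian.eigenvalues)
  rw [lamMin, ← hi]
  exact hA.eigenvalues_pos i

lemma lamMin_mul_comm {C : Matrix (Fin k) (Fin k) ℝ} (hAC : (A * C).IsHermitian)
    (hCA : (C * A).IsHermitian) : lamMin hAC = lamMin hCA := by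
  rw [lamMin, lamMin, (hAC.eigenvalues_eq_eigenvalues_iff hCA).2 (charpoly_mul_comm A C)]

lemma lamMax_mul_comm {C : Matrix (Fin k) (Fin k) ℝ} (hAC : (A * C).IsHermitian)
    (hCA : (C * A).IsHermitian) : lamMax hAC = lamMax hCA := by
  rw [lamMax, lamMax, (hAC.eigenvalues_eq_eigenvalues_iff hCA).2 (charpoly_mul_comm A C)]

end Eigenvalues

section Gram

variable {ι : Type*} [Fintype ι] (B : Matrix ι ι ℝ)

lemma dotProduct_mul_transpose_mulVec (v : ι → ℝ) :
    v ⬝ᵥ (B * Bᵀ) *ᵥ v = Bᵀ *ᵥ v ⬝ᵥ Bᵀ *ᵥ v := by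
  rw [← mulVec_mulVec, dotProduct_transpose_mulVec]

lemma dotProduct_transpose_mul_mulVec (v : ι → ℝ) :
    v ⬝ᵥ (Bᵀ * B) *ᵥ v = B *ᵥ v ⬝ᵥ B *ᵥ v := by
  rw [← mulVec_mulVec, dotProduct_transpose_mulVec]

lemma posDef_mul_transpose [DecidableEq ι] (hB : IsUnit B.det) : (B * Bᵀ).PosDef := by
  simpa [conjTranspose_eq_transpose_of_trivial] using
    PosDef.mul_conjTranspose_self B (vecMul_injective_of_isUnit ((isUnit_iff_isUnit_det B).2 hB))

end Gram

section SingularValues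

variable {k : ℕ} {B : Matrix (Fin k) (Fin k) ℝ}

lemma lamMin_mul_dotProduct_le_transpose_mulVec (hBBT : (B * Bᵀ).IsHermitian) (v : Fin k → ℝ) :
    lamMin hBBT * (v ⬝ᵥ v) ≤ Bᵀ *ᵥ v ⬝ᵥ Bᵀ *ᵥ v := by
  rw [← dotProduct_mul_transpose_mulVec]
  exact lamMin_mul_dotProduct_self_le hBBT v

lemma lamMin_mul_dotProduct_le_mulVec (hBBT : (B * Bᵀ).IsHermitian)
    (hBTB : (Bᵀ * B).IsHermitian) (v : Fin k → ℝ) :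
    lamMin hBBT * (v ⬝ᵥ v) ≤ B *ᵥ v ⬝ᵥ B *ᵥ v := by
  rw [← dotProduct_transpose_mul_mulVec, lamMin_mul_comm hBBT hBTB]
  exact lamMin_mul_dotProduct_self_le hBTB v

lemma mulVec_dotProduct_le_lamMax_mul (hBTB : (Bᵀ * B).IsHermitian) (v : Fin k → ℝ) :
    B *ᵥ v ⬝ᵥ B *ᵥ v ≤ lamMax hBTB * (v ⬝ᵥ v) := by
  rw [← dotProduct_transpose_mul_mulVec]
  exact dotProduct_mulVec_le_lamMax_mul hBTB v

lemma transpose_mulVec_dotProduct_le_lamMax_mul (hBBT : (B * Bᵀ).IsHermitian)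
    (hBTB : (Bᵀ * B).IsHermitian) (v : Fin k → ℝ) :
    Bᵀ *ᵥ v ⬝ᵥ Bᵀ *ᵥ v ≤ lamMax hBTB * (v ⬝ᵥ v) := by
  rw [← dotProduct_mul_transpose_mulVec, ← lamMax_mul_comm hBBT hBTB]
  exact dotProduct_mulVec_le_lamMax_mul hBBT v

end SingularValues

lemma sq_mul_le_one_of_le_one_div_sqrt {η L : ℝ} (hη : 0 ≤ η) (h : η ≤ 1 / √L) :
    η ^ 2 * L ≤ 1 := by
  rcases le_or_gt L 0 with hL | hL
  · nlinarith [sq_nonneg η]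
  · have hηL : η * √L ≤ 1 := (le_div_iff₀ (Real.sqrt_pos.2 hL)).1 h
    calc η ^ 2 * L = (η * √L) ^ 2 := by rw [mul_pow, Real.sq_sqrt hL.le]
      _ ≤ 1 := pow_le_one₀ (by positivity) hηL

section Extragradient

open Finset

variable {ι : Type*} [Fintype ι] {η : ℝ} {B : Matrix ι ι ℝ}

lemma extragradient_step_dotProduct_eq (a c : ι → ℝ) :
    (a - η ^ 2 • (B * Bᵀ) *ᵥ a - η • B *ᵥ c) ⬝ᵥ (a - η ^ 2 • (B * Bᵀ) *ᵥ a - η • B *ᵥ c) +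
        (c - η ^ 2 • (Bᵀ * B) *ᵥ c + η • Bᵀ *ᵥ a) ⬝ᵥ (c - η ^ 2 • (Bᵀ * B) *ᵥ c + η • Bᵀ *ᵥ a) =
      a ⬝ᵥ a + c ⬝ᵥ c - η ^ 2 * (Bᵀ *ᵥ a ⬝ᵥ Bᵀ *ᵥ a + B *ᵥ c ⬝ᵥ B *ᵥ c) +
        η ^ 4 * ((B * Bᵀ) *ᵥ a ⬝ᵥ (B * Bᵀ) *ᵥ a + (Bᵀ * B) *ᵥ c ⬝ᵥ (Bᵀ * B) *ᵥ c) := by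
  have hM := dotProduct_mul_transpose_mulVec B a
  have hN := dotProduct_transpose_mul_mulVec B c
  have hB : a ⬝ᵥ B *ᵥ c = c ⬝ᵥ Bᵀ *ᵥ a := (dotProduct_transpose_mulVec B c a).symm
  have hMN : (B * Bᵀ) *ᵥ a ⬝ᵥ B *ᵥ c = Bᵀ *ᵥ a ⬝ᵥ (Bᵀ * B) *ᵥ c := by
    rw [← mulVec_mulVec, ← mulVec_mulVec, dotProduct_comm, dotProduct_transpose_mulVec]
  simp only [dotProduct_add, dotProduct_sub, dotProduct_smul, smul_eq_mul, dotProduct_comm] at *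
  linear_combination (-2 * η ^ 2) * hM + (-2 * η ^ 2) * hN + (-2 * η) * hB + (2 * η ^ 3) * hMN

lemma extragradient_step_dotProduct_le {L : ℝ}
    (hB : ∀ v, B *ᵥ v ⬝ᵥ B *ᵥ v ≤ L * (v ⬝ᵥ v)) (hBT : ∀ v, Bᵀ *ᵥ v ⬝ᵥ Bᵀ *ᵥ v ≤ L * (v ⬝ᵥ v))
    (hηL : η ^ 2 * L ≤ 1) (a c : ι → ℝ) :
    (a - η ^ 2 • (B * Bᵀ) *ᵥ a - η • B *ᵥ c) ⬝ᵥ (a - η ^ 2 • (B * Bᵀ) *ᵥ a - η • B *ᵥ c) +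
        (c - η ^ 2 • (Bᵀ * B) *ᵥ c + η • Bᵀ *ᵥ a) ⬝ᵥ (c - η ^ 2 • (Bᵀ * B) *ᵥ c + η • Bᵀ *ᵥ a) ≤
      a ⬝ᵥ a + c ⬝ᵥ c := by
  have hMN : (B * Bᵀ) *ᵥ a ⬝ᵥ (B * Bᵀ) *ᵥ a + (Bᵀ * B) *ᵥ c ⬝ᵥ (Bᵀ * B) *ᵥ c ≤
      L * (Bᵀ *ᵥ a ⬝ᵥ Bᵀ *ᵥ a + B *ᵥ c ⬝ᵥ B *ᵥ c) := by
    rw [← mulVec_mulVec, ← mulVec_mulVec, mul_add]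
    exact add_le_add (hB _) (hBT _)
  have hnonneg := add_nonneg (dotProduct_self_nonneg (Bᵀ *ᵥ a)) (dotProduct_self_nonneg (B *ᵥ c))
  rw [extragradient_step_dotProduct_eq]
  calc _ ≤ a ⬝ᵥ a + c ⬝ᵥ c - η ^ 2 * (Bᵀ *ᵥ a ⬝ᵥ Bᵀ *ᵥ a + B *ᵥ c ⬝ᵥ B *ᵥ c) +
        η ^ 2 * (η ^ 2 * L) * (Bᵀ *ᵥ a ⬝ᵥ Bᵀ *ᵥ a + B *ᵥ c ⬝ᵥ B *ᵥ c) := by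
        linarith [mul_le_mul_of_nonneg_left hMN (pow_nonneg (sq_nonneg η) 2)]
    _ ≤ a ⬝ᵥ a + c ⬝ᵥ c := by
        linarith [mul_le_mul_of_nonneg_right hηL (mul_nonneg (sq_nonneg η) hnonneg)]

lemma mul_dotProduct_le_extragradient_sum {m : ℝ} (hm : 0 ≤ m)
    (hB : ∀ v, m * (v ⬝ᵥ v) ≤ B *ᵥ v ⬝ᵥ B *ᵥ v) (hBT : ∀ v, m * (v ⬝ᵥ v) ≤ Bᵀ *ᵥ v ⬝ᵥ Bᵀ *ᵥ v)
    (a c : ι → ℝ) :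
    m * (1 + η ^ 2 * m) * (a ⬝ᵥ a + c ⬝ᵥ c) ≤
      (B *ᵥ c + η • (B * Bᵀ) *ᵥ a) ⬝ᵥ (B *ᵥ c + η • (B * Bᵀ) *ᵥ a) +
        (Bᵀ *ᵥ a - η • (Bᵀ * B) *ᵥ c) ⬝ᵥ (Bᵀ *ᵥ a - η • (Bᵀ * B) *ᵥ c) := by
  have hMN : (B * Bᵀ) *ᵥ a ⬝ᵥ B *ᵥ c = Bᵀ *ᵥ a ⬝ᵥ (Bᵀ * B) *ᵥ c := by
    rw [← mulVec_mulVec, ← mulVec_mulVec, dotProduct_comm, dotProduct_transpose_mulVec]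
  have hMa : m * (m * (a ⬝ᵥ a)) ≤ (B * Bᵀ) *ᵥ a ⬝ᵥ (B * Bᵀ) *ᵥ a := by
    rw [← mulVec_mulVec]
    exact (mul_le_mul_of_nonneg_left (hBT a) hm).trans (hB _)
  have hNc : m * (m * (c ⬝ᵥ c)) ≤ (Bᵀ * B) *ᵥ c ⬝ᵥ (Bᵀ * B) *ᵥ c := by
    rw [← mulVec_mulVec]
    exact (mul_le_mul_of_nonneg_left (hB c) hm).trans (hBT _)
  simp only [dotProduct_add, dotProduct_sub, dotProduct_smul, smul_eq_mul, dotProduct_comm] at *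
  rw [hMN]
  linarith [hBT a, hB c, mul_le_mul_of_nonneg_left hMa (sq_nonneg η),
    mul_le_mul_of_nonneg_left hNc (sq_nonneg η)]

variable {x y : ℕ → ι → ℝ}

lemma extragradient_energy_le {L : ℝ}
    (hB : ∀ v, B *ᵥ v ⬝ᵥ B *ᵥ v ≤ L * (v ⬝ᵥ v)) (hBT : ∀ v, Bᵀ *ᵥ v ⬝ᵥ Bᵀ *ᵥ v ≤ L * (v ⬝ᵥ v))
    (hηL : η ^ 2 * L ≤ 1)
    (hx : ∀ t, x (t + 1) = x t - η ^ 2 • (B * Bᵀ) *ᵥ x t - η • B *ᵥ y t)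
    (hy : ∀ t, y (t + 1) = y t - η ^ 2 • (Bᵀ * B) *ᵥ y t + η • Bᵀ *ᵥ x t) (t : ℕ) :
    x t ⬝ᵥ x t + y t ⬝ᵥ y t ≤ x 0 ⬝ᵥ x 0 + y 0 ⬝ᵥ y 0 := by
  induction t with
  | zero => rfl
  | succ t ih =>
    rw [hx, hy]
    exact (extragradient_step_dotProduct_le hB hBT hηL _ _).trans ih

lemma extragradient_sub_fst (hx : ∀ t, x (t + 1) = x t - η ^ 2 • (B * Bᵀ) *ᵥ x t - η • B *ᵥ y t)
    (K : ℕ) :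
    x 0 - x K = η • (B *ᵥ ∑ t ∈ range K, y t + η • (B * Bᵀ) *ᵥ ∑ t ∈ range K, x t) := by
  rw [← neg_sub, ← sum_range_sub, mulVec_sum, mulVec_sum, smul_sum, ← sum_add_distrib, smul_sum,
    ← sum_neg_distrib]
  refine sum_congr rfl fun t _ ↦ ?_
  rw [hx]
  module

lemma extragradient_sub_snd (hy : ∀ t, y (t + 1) = y t - η ^ 2 • (Bᵀ * B) *ᵥ y t + η • Bᵀ *ᵥ x t)
    (K : ℕ) :
    y 0 - y K = -(η • (Bᵀ *ᵥ ∑ t ∈ range K, x t - η • (Bᵀ * B) *ᵥ ∑ t ∈ range K, y t)) := by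
  rw [← neg_sub, ← sum_range_sub, mulVec_sum, mulVec_sum, smul_sum, ← sum_sub_distrib, smul_sum]
  refine congrArg _ (sum_congr rfl fun t _ ↦ ?_)
  rw [hy]
  module

lemma extragradient_sum_dotProduct_le {m L : ℝ} (hm : 0 ≤ m)
    (hBm : ∀ v, m * (v ⬝ᵥ v) ≤ B *ᵥ v ⬝ᵥ B *ᵥ v) (hBTm : ∀ v, m * (v ⬝ᵥ v) ≤ Bᵀ *ᵥ v ⬝ᵥ Bᵀ *ᵥ v)
    (hBL : ∀ v, B *ᵥ v ⬝ᵥ B *ᵥ v ≤ L * (v ⬝ᵥ v)) (hBTL : ∀ v, Bᵀ *ᵥ v ⬝ᵥ Bᵀ *ᵥ v ≤ L * (v ⬝ᵥ v))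
    (hηL : η ^ 2 * L ≤ 1)
    (hx : ∀ t, x (t + 1) = x t - η ^ 2 • (B * Bᵀ) *ᵥ x t - η • B *ᵥ y t)
    (hy : ∀ t, y (t + 1) = y t - η ^ 2 • (Bᵀ * B) *ᵥ y t + η • Bᵀ *ᵥ x t) (K : ℕ) :
    η ^ 2 * (m * (1 + η ^ 2 * m)) *
        ((∑ t ∈ range K, x t) ⬝ᵥ (∑ t ∈ range K, x t) +
          (∑ t ∈ range K, y t) ⬝ᵥ (∑ t ∈ range K, y t)) ≤
      4 * (x 0 ⬝ᵥ x 0 + y 0 ⬝ᵥ y 0) := by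
  set S := ∑ t ∈ range K, x t
  set T := ∑ t ∈ range K, y t
  calc _ ≤ η ^ 2 * ((B *ᵥ T + η • (B * Bᵀ) *ᵥ S) ⬝ᵥ (B *ᵥ T + η • (B * Bᵀ) *ᵥ S) +
          (Bᵀ *ᵥ S - η • (Bᵀ * B) *ᵥ T) ⬝ᵥ (Bᵀ *ᵥ S - η • (Bᵀ * B) *ᵥ T)) := by
        rw [mul_assoc]
        exact mul_le_mul_of_nonneg_left (mul_dotProduct_le_extragradient_sum hm hBm hBTm S T)
          (sq_nonneg η)
    _ = (x 0 - x K) ⬝ᵥ (x 0 - x K) + (y 0 - y K) ⬝ᵥ (y 0 - y K) := by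
        rw [extragradient_sub_fst hx, extragradient_sub_snd hy]
        simp only [neg_dotProduct, dotProduct_neg, smul_dotProduct, dotProduct_smul,
          smul_eq_mul]
        ring
    _ ≤ 2 * (x 0 ⬝ᵥ x 0) + 2 * (x K ⬝ᵥ x K) + (2 * (y 0 ⬝ᵥ y 0) + 2 * (y K ⬝ᵥ y K)) :=
        add_le_add (sub_dotProduct_sub_le _ _) (sub_dotProduct_sub_le _ _)
    _ ≤ 4 * (x 0 ⬝ᵥ x 0 + y 0 ⬝ᵥ y 0) := by
        linarith [extragradient_energy_le hBL hBTL hηL hx hy K]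

end Extragradient

/-- Deterministic bilinear game with square invertible `B` and step size
`η ∈ (0, 1/√(λ_max(BᵀB))]`: the averaged extragradient iterates satisfy
`‖x̄_{K-1}‖² + ‖ȳ_{K-1}‖² ≤ 4/(η²K²λ_min(BBᵀ)(1 + η²λ_min(BBᵀ)))·(‖x_0‖² + ‖y_0‖²)`. -/
theorem stmt17 (n : ℕ) (B : Matrix (Fin n) (Fin n) ℝ) (hB : IsUnit B.det)
    (η : ℝ) (hη0 : 0 < η)
    (hBBT : (B * Bᵀ).IsHermitian) (hBTB : (Bᵀ * B).IsHermitian)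
    (hηle : η ≤ 1 / Real.sqrt (lamMax hBTB))
    (x : ℕ → Fin n → ℝ) (y : ℕ → Fin n → ℝ)
    (hx : ∀ t : ℕ, 1 ≤ t →
      x t = x (t - 1) - η ^ 2 • (B * Bᵀ).mulVec (x (t - 1)) - η • B.mulVec (y (t - 1)))
    (hy : ∀ t : ℕ, 1 ≤ t →
      y t = y (t - 1) - η ^ 2 • (Bᵀ * B).mulVec (y (t - 1)) + η • Bᵀ.mulVec (x (t - 1))) :
    ∀ K : ℕ, 1 ≤ K →
      ((K : ℝ)⁻¹ • ∑ t ∈ Finset.range K, x t) ⬝ᵥ ((K : ℝ)⁻¹ • ∑ t ∈ Finset.range K, x t) +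
        ((K : ℝ)⁻¹ • ∑ t ∈ Finset.range K, y t) ⬝ᵥ ((K : ℝ)⁻¹ • ∑ t ∈ Finset.range K, y t)
      ≤ 4 / (η ^ 2 * (K : ℝ) ^ 2 * (lamMin hBBT * (1 + η ^ 2 * lamMin hBBT))) *
          (x 0 ⬝ᵥ x 0 + y 0 ⬝ᵥ y 0) := by
  intro K hK
  obtain rfl | hn := Nat.eq_zero_or_pos n
  · simp only [dotProduct, Finset.univ_eq_empty, Finset.sum_empty, add_zero, mul_zero, le_refl]
  have : NeZero n := ⟨hn.ne'⟩
  have hm : 0 < lamMin hBBT := lamMin_pos (posDef_mul_transpose B hB)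
  have hsum := extragradient_sum_dotProduct_le hm.le
    (lamMin_mul_dotProduct_le_mulVec hBBT hBTB) (lamMin_mul_dotProduct_le_transpose_mulVec hBBT)
    (mulVec_dotProduct_le_lamMax_mul hBTB) (transpose_mulVec_dotProduct_le_lamMax_mul hBBT hBTB)
    (sq_mul_le_one_of_le_one_div_sqrt hη0.le hηle)
    (fun t ↦ by simpa using hx (t + 1) t.succ_pos) (fun t ↦ by simpa using hy (t + 1) t.succ_pos) K
  have hKpos : (0 : ℝ) < K := by exact_mod_cast hK
  simp only [smul_dotProduct, dotProduct_smul, smul_eq_mul]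
  rw [div_mul_eq_mul_div, le_div_iff₀ (by positivity)]
  refine le_of_eq_of_le ?_ hsum
  field_simp
end
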